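/- Let 𝒜 be an ultra-amenable Banach algebra. Then the Banach algebra AP(𝒜')' is amenable, where AP(𝒜')' denotes the dual of the space of almost periodic functionals, equipped with the product induced from the Arens product on 𝒜'' via the (surjective) restriction map 𝒜'' → AP(𝒜')'. -/

import Mathlib

set_option maxSynthPendingDepth 3
set_option maxHeartbeats 1000000
set_option synthInstance.maxHeartbeats 1000000

noncomputable section

open Filter Metric Topology ContinuousLinearMap
open scoped ENNReal

universe u v w y

namespace UPaper

/-- The (topological) dual of a complex normed space. -/
abbrev Dl (E : Type u) [NormedAddCommGroup E] [NormedSpace ℂ E] : Type u := E →L[ℂ] ℂ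

/-- An ultrafilter is countably incomplete when it contains a decreasing sequence of
sets with empty intersection. -/
def CountablyIncomplete {I : Type u} (𝒰 : Ultrafilter I) : Prop :=
  ∃ U : ℕ → Set I, (∀ n, U n ∈ 𝒰) ∧ (∀ n, U (n + 1) ⊆ U n) ∧ (⋂ n, U n) = (∅ : Set I)

/-- `π` realises `F` as the ultrapower `(E)_𝒰` of the Banach space `E` along the
ultrafilter `𝒰`: it is a linear surjection from `ℓ^∞(E,I)` onto `F` such that
`‖π x‖ = lim_𝒰 ‖x_i‖`.  This forces the kernel of `π` to be exactly the closed subspace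
`𝒩_𝒰` of families with `lim_𝒰 ‖x_i‖ = 0`, so that `F` is isometrically isomorphic to the
quotient `ℓ^∞(E,I)/𝒩_𝒰`, i.e. to the Banach space ultrapower `(E)_𝒰`. -/
def IsUltrapower {I : Type u} (𝒰 : Ultrafilter I) {E : Type v} {F : Type w}
    [NormedAddCommGroup E] [NormedSpace ℂ E] [NormedAddCommGroup F] [NormedSpace ℂ F]
    (π : lp (fun _ : I => E) ∞ →ₗ[ℂ] F) : Prop :=
  Function.Surjective π ∧
    ∀ x : lp (fun _ : I => E) ∞, Tendsto (fun i => ‖x i‖) (𝒰 : Filter I) (nhds ‖π x‖)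

/-- `π` realises `B` as the ultrapower `(A)_𝒰` of the Banach algebra `A` along `𝒰`:
in addition to being a Banach space ultrapower, `π` respects the coordinatewise
product on `ℓ^∞(A,I)`. -/
def IsUltrapowerAlg {I : Type u} (𝒰 : Ultrafilter I) {A : Type v} {B : Type w}
    [NonUnitalNormedRing A] [NormedSpace ℂ A] [IsScalarTower ℂ A A] [SMulCommClass ℂ A A]
    [NonUnitalNormedRing B] [NormedSpace ℂ B]
    (π : lp (fun _ : I => A) ∞ →ₗ[ℂ] B) : Prop :=
  IsUltrapower 𝒰 π ∧ ∀ x y : lp (fun _ : I => A) ∞, π (x * y) = π x * π y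

section Arens

variable {E : Type u} [NormedAddCommGroup E] [NormedSpace ℂ E]

/-- The right action of an algebra `(E, m)` on its dual:
`rAct m a μ = μ · a`, i.e. `⟨μ·a, b⟩ = ⟨μ, ab⟩`. -/
def rAct (m : E →L[ℂ] E →L[ℂ] E) : E →L[ℂ] Dl E →L[ℂ] Dl E :=
  (compL ℂ E E ℂ).flip.comp m

/-- The left action of an algebra `(E, m)` on its dual:
`lAct m a μ = a · μ`, i.e. `⟨a·μ, b⟩ = ⟨μ, ba⟩`. -/
def lAct (m : E →L[ℂ] E →L[ℂ] E) : E →L[ℂ] Dl E →L[ℂ] Dl E :=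
  (compL ℂ E E ℂ).flip.comp m.flip

/-- `arAct m Ψ μ = Ψ · μ`, i.e. `⟨Ψ·μ, a⟩ = ⟨Ψ, μ·a⟩`. -/
def arAct (m : E →L[ℂ] E →L[ℂ] E) : Dl (Dl E) →L[ℂ] Dl E →L[ℂ] Dl E :=
  letI T1 : ((E →L[ℂ] Dl E) →L[ℂ] Dl E) →L[ℂ] (Dl E →L[ℂ] Dl E) :=
    (compL ℂ (Dl E) (E →L[ℂ] Dl E) (Dl E)).flip ((rAct m).flip)
  letI T2 : Dl (Dl E) →L[ℂ] ((E →L[ℂ] Dl E) →L[ℂ] Dl E) := compL ℂ E (Dl E) ℂ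
  T1.comp T2

/-- `brAct m Φ μ = μ · Φ`, i.e. `⟨μ·Φ, a⟩ = ⟨Φ, a·μ⟩`. -/
def brAct (m : E →L[ℂ] E →L[ℂ] E) : Dl (Dl E) →L[ℂ] Dl E →L[ℂ] Dl E :=
  letI T1 : ((E →L[ℂ] Dl E) →L[ℂ] Dl E) →L[ℂ] (Dl E →L[ℂ] Dl E) :=
    (compL ℂ (Dl E) (E →L[ℂ] Dl E) (Dl E)).flip ((lAct m).flip)
  letI T2 : Dl (Dl E) →L[ℂ] ((E →L[ℂ] Dl E) →L[ℂ] Dl E) := compL ℂ E (Dl E) ℂ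
  T1.comp T2

/-- The first Arens product on the bidual: `⟨Φ □ Ψ, μ⟩ = ⟨Φ, Ψ·μ⟩`. -/
def arensMul1 (m : E →L[ℂ] E →L[ℂ] E) : Dl (Dl E) →L[ℂ] Dl (Dl E) →L[ℂ] Dl (Dl E) :=
  ((compL ℂ (Dl E) (Dl E) ℂ).flip.comp (arAct m)).flip

/-- The second Arens product on the bidual: `⟨Φ ◇ Ψ, μ⟩ = ⟨Ψ, μ·Φ⟩`. -/
def arensMul2 (m : E →L[ℂ] E →L[ℂ] E) : Dl (Dl E) →L[ℂ] Dl (Dl E) →L[ℂ] Dl (Dl E) :=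
  (compL ℂ (Dl E) (Dl E) ℂ).flip.comp (brAct m)

/-- Sanity check: the above maps are given by their correct defining formulas. -/
theorem arens_apply (m : E →L[ℂ] E →L[ℂ] E) (Φ Ψ : Dl (Dl E)) (μ : Dl E) (a b : E) :
    rAct m a μ b = μ (m a b) ∧ lAct m a μ b = μ (m b a) ∧
    arAct m Ψ μ a = Ψ (rAct m a μ) ∧ brAct m Φ μ a = Φ (lAct m a μ) ∧
    arensMul1 m Φ Ψ μ = Φ (arAct m Ψ μ) ∧ arensMul2 m Φ Ψ μ = Ψ (brAct m Φ μ) :=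
  ⟨by simp [rAct], by simp [lAct], by simp [arAct], by simp [brAct],
    by simp [arensMul1, arAct], by simp [arensMul2, brAct]⟩

/-- The algebra `(E, m)` is Arens regular: its two Arens products coincide. -/
def ArensRegularWith (m : E →L[ℂ] E →L[ℂ] E) : Prop :=
  ∀ Φ Ψ : Dl (Dl E), arensMul1 m Φ Ψ = arensMul2 m Φ Ψ

/-- `μ` is a weakly almost periodic functional on the algebra `(E, m)`: the orbit map
`a ↦ a·μ` is a weakly compact operator `E → E'`, i.e. the image of the closed unit ball
is relatively compact for the weak topology of `E'`. -/
def IsWAP (m : E →L[ℂ] E →L[ℂ] E) (μ : Dl E) : Prop :=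
  IsCompact (closure ((toWeakSpace ℂ (Dl E)) '' ((fun a => lAct m a μ) '' closedBall (0 : E) 1)))

/-- `μ` is an almost periodic functional on the algebra `(E, m)`: the orbit map
`a ↦ a·μ` is a compact operator `E → E'`. -/
def IsAP (m : E →L[ℂ] E →L[ℂ] E) (μ : Dl E) : Prop :=
  IsCompact (closure ((fun a => lAct m a μ) '' closedBall (0 : E) 1))

end Arens

/-- A Banach algebra is Arens regular when its two Arens products coincide. -/
def ArensRegular (A : Type u) [NonUnitalNormedRing A] [NormedSpace ℂ A]
    [IsScalarTower ℂ A A] [SMulCommClass ℂ A A] : Prop :=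
  ArensRegularWith (ContinuousLinearMap.mul ℂ A)

section Amenability

variable {A : Type u} [NormedAddCommGroup A] [NormedSpace ℂ A]

/-- `L`, `R` are commuting bounded left and right actions of the algebra `(A, m)` on the
Banach space `X`, making `X` a Banach `A`-bimodule; `L a x = a · x` and `R a x = x · a`. -/
def IsBimoduleWith (m : A →L[ℂ] A →L[ℂ] A) {X : Type v}
    [NormedAddCommGroup X] [NormedSpace ℂ X] (L R : A →L[ℂ] X →L[ℂ] X) : Prop :=
  (∀ a b x, L (m a b) x = L a (L b x)) ∧
  (∀ a b x, R (m a b) x = R b (R a x)) ∧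
  (∀ a b x, L a (R b x) = R b (L a x))

/-- The algebra `(A, m)` is amenable: for every Banach `A`-bimodule `X`, every continuous
derivation from `A` into the dual module `X'` is inner.  On the dual module the actions
are `a·λ = λ ∘ R a` and `λ·a = λ ∘ L a`; a derivation satisfies `D(ab) = a·D(b) + D(a)·b`,
and it is inner when `D a = a·λ − λ·a` for some `λ ∈ X'`. -/
def AmenableWith (m : A →L[ℂ] A →L[ℂ] A) : Prop :=
  ∀ (X : Type v) [NormedAddCommGroup X] [NormedSpace ℂ X] [CompleteSpace X],
    ∀ L R : A →L[ℂ] X →L[ℂ] X, IsBimoduleWith m L R →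
      ∀ D : A →L[ℂ] (X →L[ℂ] ℂ),
        (∀ a b, D (m a b) = (D b).comp (R a) + (D a).comp (L b)) →
        ∃ lam : X →L[ℂ] ℂ, ∀ a, D a = lam.comp (R a) - lam.comp (L a)

end Amenability

/-- A Banach algebra is amenable: every continuous derivation into the dual of a
Banach bimodule is inner. -/
def Amenable (A : Type u) [NonUnitalNormedRing A] [NormedSpace ℂ A]
    [IsScalarTower ℂ A A] [SMulCommClass ℂ A A] : Prop :=
  AmenableWith.{u, u} (ContinuousLinearMap.mul ℂ A)

/-- A Banach algebra is ultra-amenable: every ultrapower of it is amenable. -/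
def UltraAmenable (A : Type u) [NonUnitalNormedRing A] [NormedSpace ℂ A]
    [IsScalarTower ℂ A A] [SMulCommClass ℂ A A] : Prop :=
  ∀ (I : Type u) (𝒰 : Ultrafilter I) (B : Type u)
    [NonUnitalNormedRing B] [NormedSpace ℂ B] [IsScalarTower ℂ B B] [SMulCommClass ℂ B B]
    [CompleteSpace B] (π : lp (fun _ : I => A) ∞ →ₗ[ℂ] B),
      IsUltrapowerAlg 𝒰 π → Amenable B

end UPaper

/-!
Index by the finite subsets `F` of `𝒜'` and take an ultrafilter `𝒰` finer than the order filter.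
Sending the class of a bounded family `(a_F)` to its weak-* limit `μ ↦ lim_𝒰 μ(a_F)` is a
contraction `(𝒜)_𝒰 → 𝒜''`, and it is onto by Helly's lemma: for each `F` pick `a_F` with
`μ(a_F) = Φ(μ)` for `μ ∈ F` and `‖a_F‖ < ‖Φ‖ + 1`. Composed with the restriction map it gives a
bounded surjection `(𝒜)_𝒰 → AP(𝒜')'`, which is multiplicative: for almost periodic `μ` the
orbit `b_F · μ` lies in a norm compact set, hence converges in norm along `𝒰`, and norm
convergence is what identifies `lim_𝒰 μ(a_F b_F)` with the first Arens product. Amenability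
passes to the image of a bounded surjective homomorphism.
-/

theorem IsCompact.exists_tendsto_ultrafilter {X I : Type*} [TopologicalSpace X] {K : Set X}
    (hK : IsCompact K) (𝒰 : Ultrafilter I) {g : I → X} (hg : ∀ i, g i ∈ K) :
    ∃ x ∈ K, Tendsto g 𝒰 (𝓝 x) :=
  hK.ultrafilter_le_nhds (𝒰.map g) (le_principal_iff.2 (Ultrafilter.mem_map.2 (univ_mem' hg)))

theorem lp.isBoundedUnder_norm_apply {I E : Type*} [NormedAddCommGroup E]
    (x : lp (fun _ : I => E) ∞) (l : Filter I) : IsBoundedUnder (· ≤ ·) l (fun i => ‖x i‖) :=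
  isBoundedUnder_of ⟨‖x‖, lp.norm_apply_le_norm ENNReal.top_ne_zero x⟩

section Helly

variable {𝕜 : Type*} [RCLike 𝕜] {E : Type*} [NormedAddCommGroup E] [NormedSpace 𝕜 E]

theorem finrank_strongDual [FiniteDimensional 𝕜 E] :
    Module.finrank 𝕜 (StrongDual 𝕜 E) = Module.finrank 𝕜 E :=
  LinearMap.toContinuousLinearMap.finrank_eq.symm.trans Subspace.dual_finrank_eq

theorem NormedSpace.inclusionInDoubleDual_surjective [FiniteDimensional 𝕜 E] :
    Function.Surjective (NormedSpace.inclusionInDoubleDual 𝕜 E) :=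
  (LinearMap.injective_iff_surjective_of_finrank_eq_finrank
    (f := (NormedSpace.inclusionInDoubleDual 𝕜 E : E →ₗ[𝕜] _))
    (by rw [finrank_strongDual (E := StrongDual 𝕜 E), finrank_strongDual])).1
    (NormedSpace.inclusionInDoubleDualLi 𝕜).injective

/-- Helly's lemma. -/
theorem exists_norm_lt_forall_apply_eq (Φ : StrongDual 𝕜 (StrongDual 𝕜 E))
    (F : Finset (StrongDual 𝕜 E)) {ε : ℝ} (hε : 0 < ε) :
    ∃ a : E, ‖a‖ < ‖Φ‖ + ε ∧ ∀ μ ∈ F, μ a = Φ μ := by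
  let S : E →L[𝕜] (F → 𝕜) := ContinuousLinearMap.pi fun μ => μ.1
  let V := LinearMap.ker (S : E →ₗ[𝕜] F → 𝕜)
  have : IsClosed (V : Set E) := S.isClosed_ker
  have : FiniteDimensional 𝕜 (E ⧸ V) :=
    (S : E →ₗ[𝕜] F → 𝕜).quotKerEquivRange.symm.finiteDimensional
  let j : StrongDual 𝕜 (E ⧸ V) →L[𝕜] StrongDual 𝕜 E := (compL 𝕜 E (E ⧸ V) 𝕜).flip V.mkQL
  -- `E ⧸ V` is finite dimensional, hence reflexive: `Φ ∘ j` is evaluation at some `b : E ⧸ V`.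
  obtain ⟨b, hb⟩ := NormedSpace.inclusionInDoubleDual_surjective (Φ.comp j)
  have hb_norm : ‖b‖ ≤ ‖Φ‖ := NormedSpace.norm_le_dual_bound 𝕜 b (norm_nonneg Φ) fun g => calc
    ‖g b‖ = ‖Φ (j g)‖ := by rw [← comp_apply, ← hb]; rfl
    _ ≤ ‖Φ‖ * ‖j g‖ := Φ.le_opNorm _
    _ ≤ ‖Φ‖ * ‖g‖ := by
      gcongr
      refine opNorm_le_bound _ (norm_nonneg g) fun x => (g.le_opNorm _).trans ?_
      gcongr
      exact Submodule.Quotient.norm_mk_le V x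
  obtain ⟨a, rfl, ha⟩ := Submodule.Quotient.norm_mk_lt b hε
  refine ⟨a, ha.trans_le (by linarith), fun μ hμ => ?_⟩
  have hker : V ≤ LinearMap.ker (μ : E →ₗ[𝕜] 𝕜) := fun x hx => congrFun hx ⟨μ, hμ⟩
  let μ' : StrongDual 𝕜 (E ⧸ V) := LinearMap.toContinuousLinearMap (V.liftQ _ hker)
  exact congrArg (· μ') hb

end Helly

namespace UPaper

section AlmostPeriodic

variable {E : Type v} [NormedAddCommGroup E] [NormedSpace ℂ E] {m : E →L[ℂ] E →L[ℂ] E}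
  {μ : Dl E}

theorem arensMul1_apply (Φ Ψ : Dl (Dl E)) : arensMul1 m Φ Ψ μ = Φ (arAct m Ψ μ) := rfl

theorem IsAP.isCompactOperator (hμ : IsAP m μ) : IsCompactOperator ((lAct m).flip μ) :=
  (isCompactOperator_iff_isCompact_closure_image_closedBall _ one_pos).2 hμ

theorem IsAP.exists_tendsto_lAct (hμ : IsAP m μ) {I : Type*} (𝒰 : Ultrafilter I) {y : I → E}
    (hy : Bornology.IsBounded (Set.range y)) :
    ∃ ν, Tendsto (fun i => lAct m (y i) μ) 𝒰 (𝓝 ν) := by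
  obtain ⟨K, hK, hyK⟩ := hμ.isCompactOperator.image_subset_compact_of_bounded hy
  obtain ⟨ν, -, hν⟩ := hK.exists_tendsto_ultrafilter 𝒰 fun i => hyK ⟨y i, ⟨i, rfl⟩, rfl⟩
  exact ⟨ν, hν⟩

end AlmostPeriodic

theorem AmenableWith.of_surjective {A : Type u} {B : Type v} [NormedAddCommGroup A]
    [NormedSpace ℂ A] [NormedAddCommGroup B] [NormedSpace ℂ B] {mA : A →L[ℂ] A →L[ℂ] A}
    {mB : B →L[ℂ] B →L[ℂ] B} (θ : A →L[ℂ] B) (hθ : ∀ a b, θ (mA a b) = mB (θ a) (θ b))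
    (hθ_surj : Function.Surjective θ) (h : AmenableWith.{u, w} mA) : AmenableWith.{v, w} mB := by
  intro X _ _ _ L R ⟨hL, hR, hLR⟩ D hD
  obtain ⟨lam, hlam⟩ := h X (L.comp θ) (R.comp θ)
    ⟨fun a b x => by simp [hθ, hL], fun a b x => by simp [hθ, hR], fun a b x => hLR _ _ x⟩
    (D.comp θ) fun a b => by simp [hθ, hD]
  refine ⟨lam, fun b => ?_⟩
  obtain ⟨a, rfl⟩ := hθ_surj b
  exact hlam a

section NullSubmodule

variable {I : Type u} (l : Filter I) (E : Type v) [NormedAddCommGroup E] [NormedSpace ℂ E]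

def nullSubmodule : Submodule ℂ (lp (fun _ : I => E) ∞) where
  carrier := {x | Tendsto x l (𝓝 0)}
  zero_mem' := tendsto_const_nhds
  add_mem' {x y} hx hy := by
    show Tendsto (fun i => (x + y) i) l (𝓝 0)
    simpa using hx.add hy
  smul_mem' c x hx := by
    show Tendsto (fun i => (c • x) i) l (𝓝 0)
    simpa using hx.const_smul c

variable {l E}

theorem mem_nullSubmodule {x : lp (fun _ : I => E) ∞} :
    x ∈ nullSubmodule l E ↔ Tendsto x l (𝓝 0) := Iff.rfl

instance isClosed_nullSubmodule : IsClosed (nullSubmodule l E : Set (lp (fun _ : I => E) ∞)) := by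
  refine isClosed_of_closure_subset fun x hx => Metric.tendsto_nhds.2 fun ε hε => ?_
  obtain ⟨y, hy, hxy⟩ := Metric.mem_closure_iff.1 hx (ε / 2) (half_pos hε)
  filter_upwards [Metric.tendsto_nhds.1 hy (ε / 2) (half_pos hε)] with i hi
  have hxy_i : dist (x i) (y i) ≤ dist x y := by
    simpa [dist_eq_norm] using lp.norm_apply_le_norm ENNReal.top_ne_zero (x - y) i
  linarith [dist_triangle (x i) (y i) 0]

end NullSubmodule

section NullIdeal

variable {I : Type u} {l : Filter I} {A : Type v} [NonUnitalNormedRing A] [NormedSpace ℂ A]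

theorem mul_mem_nullSubmodule_left (x : lp (fun _ : I => A) ∞) {n : lp (fun _ : I => A) ∞}
    (hn : n ∈ nullSubmodule l A) : x * n ∈ nullSubmodule l A := by
  show Tendsto (fun i => (x * n) i) l (𝓝 0)
  simpa [lp.infty_coeFn_mul] using
    isBoundedUnder_le_mul_tendsto_zero (lp.isBoundedUnder_norm_apply x l) hn

theorem mul_mem_nullSubmodule_right (x : lp (fun _ : I => A) ∞) {n : lp (fun _ : I => A) ∞}
    (hn : n ∈ nullSubmodule l A) : n * x ∈ nullSubmodule l A := by
  show Tendsto (fun i => (n * x) i) l (𝓝 0)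
  simpa [lp.infty_coeFn_mul] using
    hn.zero_mul_isBoundedUnder_le (lp.isBoundedUnder_norm_apply x l)

end NullIdeal

section UltraLimit

variable {I : Type u} (𝒰 : Ultrafilter I) {E : Type v} [NormedAddCommGroup E] [NormedSpace ℂ E]

theorem tendsto_limUnder_apply (x : lp (fun _ : I => E) ∞) (μ : Dl E) :
    Tendsto (fun i => μ (x i)) 𝒰 (𝓝 (limUnder 𝒰 fun i => μ (x i))) := by
  obtain ⟨c, -, hc⟩ := (isCompact_closedBall (0 : ℂ) (‖μ‖ * ‖x‖)).exists_tendsto_ultrafilter 𝒰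
    fun i => mem_closedBall_zero_iff.2 <|
      μ.le_opNorm_of_le (lp.norm_apply_le_norm ENNReal.top_ne_zero x i)
  exact tendsto_nhds_limUnder ⟨c, hc⟩

def ultraLimPairing : lp (fun _ : I => E) ∞ →ₗ[ℂ] Dl E →ₗ[ℂ] ℂ :=
  LinearMap.mk₂ ℂ (fun x μ => limUnder 𝒰 fun i => μ (x i))
    (fun x y μ => Tendsto.limUnder_eq <| by
      simpa using (tendsto_limUnder_apply 𝒰 x μ).add (tendsto_limUnder_apply 𝒰 y μ))
    (fun c x μ => Tendsto.limUnder_eq <| by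
      simpa using (tendsto_limUnder_apply 𝒰 x μ).const_smul c)
    (fun x μ ν => Tendsto.limUnder_eq <| by
      simpa using (tendsto_limUnder_apply 𝒰 x μ).add (tendsto_limUnder_apply 𝒰 x ν))
    (fun c x μ => Tendsto.limUnder_eq <| by
      simpa using (tendsto_limUnder_apply 𝒰 x μ).const_smul c)

theorem ultraLimPairing_eq_zero {n : lp (fun _ : I => E) ∞} (hn : n ∈ nullSubmodule 𝒰 E) :
    ultraLimPairing 𝒰 n = 0 :=
  LinearMap.ext fun μ => Tendsto.limUnder_eq <| by
    simpa [Function.comp_def] using (μ.continuous.tendsto 0).comp hn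

end UltraLimit

def Ultrapower {I : Type u} (𝒰 : Ultrafilter I) (E : Type v) [NormedAddCommGroup E]
    [NormedSpace ℂ E] : Type (max u v) :=
  lp (fun _ : I => E) ∞ ⧸ nullSubmodule (𝒰 : Filter I) E

namespace Ultrapower

section Normed

variable {I : Type u} (𝒰 : Ultrafilter I) (E : Type v) [NormedAddCommGroup E] [NormedSpace ℂ E]

instance : NormedAddCommGroup (Ultrapower 𝒰 E) :=
  inferInstanceAs (NormedAddCommGroup (lp _ ∞ ⧸ nullSubmodule _ E))

instance : NormedSpace ℂ (Ultrapower 𝒰 E) :=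
  inferInstanceAs (NormedSpace ℂ (lp _ ∞ ⧸ nullSubmodule _ E))

instance [CompleteSpace E] : CompleteSpace (Ultrapower 𝒰 E) :=
  inferInstanceAs (CompleteSpace (lp _ ∞ ⧸ nullSubmodule _ E))

def mk : lp (fun _ : I => E) ∞ →ₗ[ℂ] Ultrapower 𝒰 E := (nullSubmodule (𝒰 : Filter I) E).mkQ

variable {𝒰 E}

theorem mk_surjective : Function.Surjective (mk 𝒰 E) := Submodule.mkQ_surjective _

theorem mk_eq_mk_iff {x y : lp (fun _ : I => E) ∞} :
    mk 𝒰 E x = mk 𝒰 E y ↔ Tendsto (fun i => x i - y i) 𝒰 (𝓝 0) :=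
  (Submodule.Quotient.eq _).trans (by rw [mem_nullSubmodule, lp.coeFn_sub]; rfl)

theorem norm_mk_le (x : lp (fun _ : I => E) ∞) : ‖mk 𝒰 E x‖ ≤ ‖x‖ :=
  Submodule.Quotient.norm_mk_le _ x

theorem exists_mk_eq_norm_lt (u : Ultrapower 𝒰 E) {b : ℝ} (hb : ‖u‖ < b) :
    ∃ x, mk 𝒰 E x = u ∧ ‖x‖ < b := by
  obtain ⟨x, hx, hxb⟩ := Submodule.Quotient.norm_mk_lt (S := nullSubmodule (𝒰 : Filter I) E) u
    (sub_pos.2 hb)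
  exact ⟨x, hx, hxb.trans_eq (add_sub_cancel _ _)⟩

theorem norm_mk_le_of_eventually_norm_le {x : lp (fun _ : I => E) ∞} {r : ℝ}
    (h : ∀ᶠ i in 𝒰, ‖x i‖ ≤ r) : ‖mk 𝒰 E x‖ ≤ r := by
  obtain ⟨i₀, hi₀⟩ := h.exists
  have hr : 0 ≤ r := (norm_nonneg _).trans hi₀
  let s := {i | ‖x i‖ ≤ r}
  have hy : ∀ i, ‖s.indicator x i‖ ≤ r := fun i => by
    rw [Set.indicator_apply]
    split_ifs with hi
    exacts [hi, norm_zero.trans_le hr]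
  let y : lp (fun _ : I => E) ∞ := ⟨s.indicator x, memℓp_infty ⟨r, by rintro _ ⟨i, rfl⟩; exact hy i⟩⟩
  have hxy : mk 𝒰 E x = mk 𝒰 E y := mk_eq_mk_iff.2 <| tendsto_const_nhds.congr' <| by
    filter_upwards [h] with i hi
    simp [y, s, Set.indicator_of_mem (show i ∈ s from hi)]
  rw [hxy]
  exact (norm_mk_le y).trans (lp.norm_le_of_forall_le hr hy)

theorem tendsto_norm_mk (x : lp (fun _ : I => E) ∞) :
    Tendsto (fun i => ‖x i‖) 𝒰 (𝓝 ‖mk 𝒰 E x‖) := by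
  refine tendsto_order.2 ⟨fun a ha => ?_, fun b hb => ?_⟩
  · by_contra h
    simp only [← Ultrafilter.eventually_not, not_lt] at h
    exact (norm_mk_le_of_eventually_norm_le h).not_gt ha
  · obtain ⟨m, hm, hmb⟩ := exists_mk_eq_norm_lt (mk 𝒰 E x) hb
    have hxm : Tendsto (fun i => x i - m i) 𝒰 (𝓝 0) := mk_eq_mk_iff.1 hm.symm
    filter_upwards [(tendsto_zero_iff_norm_tendsto_zero.1 hxm).eventually_lt_const
      (sub_pos.2 hmb)] with i hi
    calc ‖x i‖ ≤ ‖x i - m i‖ + ‖m i‖ := norm_le_norm_sub_add _ _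
      _ < b - ‖m‖ + ‖m‖ := add_lt_add_of_lt_of_le hi (lp.norm_apply_le_norm ENNReal.top_ne_zero m i)
      _ = b := sub_add_cancel _ _

def toBidual : Ultrapower 𝒰 E →L[ℂ] Dl (Dl E) :=
  LinearMap.mkContinuous₂
    ((nullSubmodule (𝒰 : Filter I) E).liftQ (ultraLimPairing 𝒰) fun _ hn =>
      ultraLimPairing_eq_zero 𝒰 hn) 1 fun u μ => by
    obtain ⟨x, rfl⟩ := mk_surjective u
    rw [one_mul, mul_comm]
    exact le_of_tendsto_of_tendsto' (tendsto_limUnder_apply 𝒰 x μ).norm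
      ((tendsto_norm_mk x).const_mul ‖μ‖) fun i => μ.le_opNorm (x i)

theorem tendsto_toBidual_mk (x : lp (fun _ : I => E) ∞) (μ : Dl E) :
    Tendsto (fun i => μ (x i)) 𝒰 (𝓝 (toBidual (mk 𝒰 E x) μ)) :=
  tendsto_limUnder_apply 𝒰 x μ

end Normed

theorem toBidual_surjective {E : Type u} [NormedAddCommGroup E] [NormedSpace ℂ E]
    {𝒰 : Ultrafilter (Finset (Dl E))} (h𝒰 : ↑𝒰 ≤ (atTop : Filter (Finset (Dl E)))) :
    Function.Surjective (toBidual (𝒰 := 𝒰) (E := E)) := by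
  intro Φ
  choose a ha using fun F => exists_norm_lt_forall_apply_eq Φ F one_pos
  let x : lp (fun _ : Finset (Dl E) => E) ∞ :=
    ⟨a, memℓp_infty ⟨‖Φ‖ + 1, by rintro _ ⟨F, rfl⟩; exact (ha F).1.le⟩⟩
  refine ⟨mk 𝒰 E x, ext fun μ => tendsto_nhds_unique (tendsto_toBidual_mk x μ) ?_⟩
  refine tendsto_const_nhds.congr' ?_
  filter_upwards [h𝒰 (eventually_ge_atTop {μ})] with F hF
  exact ((ha F).2 μ (Finset.singleton_subset_iff.1 hF)).symm

section Algebra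

variable {I : Type u} {𝒰 : Ultrafilter I} {A : Type v} [NonUnitalNormedRing A] [NormedSpace ℂ A]

instance : Mul (Ultrapower 𝒰 A) where
  mul := Quotient.map₂ (· * ·) fun x x' hx y y' hy => by
    simp only [Submodule.quotientRel_def] at hx hy ⊢
    have h : x * y - x' * y' = x * (y - y') + (x - x') * y' := by noncomm_ring
    rw [h]
    exact add_mem (mul_mem_nullSubmodule_left x hy) (mul_mem_nullSubmodule_right y' hx)

theorem mk_mul (x y : lp (fun _ : I => A) ∞) : mk 𝒰 A (x * y) = mk 𝒰 A x * mk 𝒰 A y := rfl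

instance : NonUnitalRing (Ultrapower 𝒰 A) :=
  mk_surjective.nonUnitalRing (mk 𝒰 A) (map_zero _) (map_add _) mk_mul (map_neg _) (map_sub _)
    (fun _ _ => map_nsmul _ _ _) (fun _ _ => map_zsmul _ _ _)

instance : NonUnitalNormedRing (Ultrapower 𝒰 A) where
  __ := (inferInstance : NormedAddCommGroup (Ultrapower 𝒰 A))
  __ := (inferInstance : NonUnitalRing (Ultrapower 𝒰 A))
  norm_mul_le u v := by
    obtain ⟨x, rfl⟩ := mk_surjective u
    obtain ⟨y, rfl⟩ := mk_surjective v
    rw [← mk_mul]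
    refine le_of_tendsto_of_tendsto' (tendsto_norm_mk (x * y))
      ((tendsto_norm_mk x).mul (tendsto_norm_mk y)) fun i => ?_
    rw [lp.infty_coeFn_mul]
    exact norm_mul_le _ _

variable [IsScalarTower ℂ A A] [SMulCommClass ℂ A A]

instance : IsScalarTower ℂ (Ultrapower 𝒰 A) (Ultrapower 𝒰 A) where
  smul_assoc c u v := by
    obtain ⟨x, rfl⟩ := mk_surjective u
    obtain ⟨y, rfl⟩ := mk_surjective v
    simp only [smul_eq_mul, ← mk_mul, ← map_smul, smul_mul_assoc]

instance : SMulCommClass ℂ (Ultrapower 𝒰 A) (Ultrapower 𝒰 A) where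
  smul_comm c u v := by
    obtain ⟨x, rfl⟩ := mk_surjective u
    obtain ⟨y, rfl⟩ := mk_surjective v
    simp only [smul_eq_mul, ← mk_mul, ← map_smul, mul_smul_comm]

theorem isUltrapowerAlg : IsUltrapowerAlg 𝒰 (mk 𝒰 A) :=
  ⟨⟨mk_surjective, tendsto_norm_mk⟩, mk_mul⟩

theorem toBidual_mul_apply_of_isAP (u v : Ultrapower 𝒰 A) {μ : Dl A} (hμ : IsAP (mul ℂ A) μ) :
    toBidual (u * v) μ = arensMul1 (mul ℂ A) (toBidual u) (toBidual v) μ := by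
  obtain ⟨x, rfl⟩ := mk_surjective u
  obtain ⟨y, rfl⟩ := mk_surjective v
  obtain ⟨ν, hν⟩ := hμ.exists_tendsto_lAct 𝒰 (isBounded_iff_forall_norm_le.2
    ⟨‖y‖, Set.forall_mem_range.2 (lp.norm_apply_le_norm ENNReal.top_ne_zero y)⟩)
  have hν_eq : arAct (mul ℂ A) (toBidual (mk 𝒰 A y)) μ = ν := by
    ext a
    exact tendsto_nhds_unique (tendsto_toBidual_mk y _)
      (((apply ℂ ℂ a).continuous.tendsto ν).comp hν)
  have hx : Tendsto (fun i => (lAct (mul ℂ A) (y i) μ - ν) (x i)) 𝒰 (𝓝 0) := by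
    refine squeeze_zero_norm (fun i => ?_) <| by
      simpa using (tendsto_iff_norm_sub_tendsto_zero.1 hν).mul_const ‖x‖
    exact le_opNorm_of_le _ (lp.norm_apply_le_norm ENNReal.top_ne_zero x i)
  rw [arensMul1_apply, hν_eq, ← mk_mul]
  refine tendsto_nhds_unique (tendsto_toBidual_mk (x * y) μ) ?_
  simpa [lAct] using (tendsto_toBidual_mk x ν).add hx

end Algebra

end Ultrapower

theorem ap_dual_amenable_of_ultraAmenable_general
    {A : Type u}
    [NonUnitalNormedRing A] [NormedSpace ℂ A] [IsScalarTower ℂ A A] [SMulCommClass ℂ A A]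
    [CompleteSpace A]
    (hA : UltraAmenable A)
    {B : Type u}
    [NonUnitalNormedRing B] [NormedSpace ℂ B] [IsScalarTower ℂ B B] [SMulCommClass ℂ B B]
    (q : Dl (Dl A) →ₗ[ℂ] B)
    (hqmul : ∀ Φ Ψ : Dl (Dl A),
      q (arensMul1 (ContinuousLinearMap.mul ℂ A) Φ Ψ) = q Φ * q Ψ)
    (hqsurj : Function.Surjective q)
    (hker : ∀ Φ : Dl (Dl A),
      q Φ = 0 ↔ ∀ μ : Dl A, IsAP (ContinuousLinearMap.mul ℂ A) μ → Φ μ = 0)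
    (hqnorm : ∀ Φ : Dl (Dl A), ‖q Φ‖ =
      Metric.infDist Φ {Ψ : Dl (Dl A) | ∀ μ : Dl A,
        IsAP (ContinuousLinearMap.mul ℂ A) μ → Ψ μ = 0}) :
    Amenable B := by
  let 𝒰 := Ultrafilter.of (atTop : Filter (Finset (Dl A)))
  have hq_le : ∀ Φ, ‖q Φ‖ ≤ 1 * ‖Φ‖ := fun Φ => by
    have h0 : (0 : Dl (Dl A)) ∈ {Ψ : Dl (Dl A) | ∀ μ, IsAP (mul ℂ A) μ → Ψ μ = 0} :=
      fun _ _ => rfl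
    rw [hqnorm, one_mul, ← dist_zero_right]
    exact infDist_le_dist_of_mem h0
  have hq_eq : ∀ Φ Ψ, (∀ μ, IsAP (mul ℂ A) μ → Φ μ = Ψ μ) → q Φ = q Ψ := fun Φ Ψ h =>
    sub_eq_zero.1 <| by
      rw [← map_sub]; exact (hker _).2 fun μ hμ => sub_eq_zero.2 (h μ hμ)
  refine AmenableWith.of_surjective ((q.mkContinuous 1 hq_le).comp Ultrapower.toBidual)
    (fun u v => ?_) (hqsurj.comp (Ultrapower.toBidual_surjective (Ultrafilter.of_le _)))
    (hA _ 𝒰 _ _ Ultrapower.isUltrapowerAlg)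
  show q (Ultrapower.toBidual (u * v)) = q (Ultrapower.toBidual u) * q (Ultrapower.toBidual v)
  rw [← hqmul]
  exact hq_eq _ _ fun μ hμ => Ultrapower.toBidual_mul_apply_of_isAP u v hμ

/-- Let `𝒜` be an ultra-amenable Banach algebra.  Then the Banach
algebra `AP(𝒜')'` is amenable.  Here `AP(𝒜')'` is realised as a Banach algebra `B`
together with the restriction map `q : 𝒜'' → B = AP(𝒜')'` (which is surjective by the
Hahn–Banach theorem): `q` is multiplicative for the Arens product, its kernel is the
annihilator of `AP(𝒜')`, and it is a quotient map of norms, so that `B` carries the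
product induced from the Arens product on `𝒜''`. -/
theorem ap_dual_amenable_of_ultraAmenable
    {A : Type u}
    [NonUnitalNormedRing A] [NormedSpace ℂ A] [IsScalarTower ℂ A A] [SMulCommClass ℂ A A]
    [CompleteSpace A]
    (hA : UltraAmenable A)
    {B : Type u}
    [NonUnitalNormedRing B] [NormedSpace ℂ B] [IsScalarTower ℂ B B] [SMulCommClass ℂ B B]
    [CompleteSpace B]
    (q : Dl (Dl A) →ₗ[ℂ] B)
    (hqmul : ∀ Φ Ψ : Dl (Dl A),
      q (arensMul1 (ContinuousLinearMap.mul ℂ A) Φ Ψ) = q Φ * q Ψ)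
    (hqsurj : Function.Surjective q)
    (hker : ∀ Φ : Dl (Dl A),
      q Φ = 0 ↔ ∀ μ : Dl A, IsAP (ContinuousLinearMap.mul ℂ A) μ → Φ μ = 0)
    (hqnorm : ∀ Φ : Dl (Dl A), ‖q Φ‖ =
      Metric.infDist Φ {Ψ : Dl (Dl A) | ∀ μ : Dl A,
        IsAP (ContinuousLinearMap.mul ℂ A) μ → Ψ μ = 0}) :
    Amenable B :=
  ap_dual_amenable_of_ultraAmenable_general hA q hqmul hqsurj hker hqnorm

end UPaper
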